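/- Interleaving composition via the function χI (with χI(e1, skip) = e1, χI(skip, e2) = e2, and χI(e1, e2) undefined when neither is skip) yields traces that are exactly the shuffles (interleavings) of pairs of traces from the two component systems, after removing the skip padding. -/

import Mathlib

/-- Event systems: labeled transition systems. -/
structure ES (S E : Type) where
  trans : S → E → S → Prop

namespace ES

/-- Extension of the transition relation to finite sequences of events. -/
inductive mtrans {S E : Type} (M : ES S E) : S → List E → S → Prop
  | nil (s : S) : mtrans M s [] s
  | snoc {s s' s'' : S} {τ : List E} {e : E} :
      mtrans M s τ s' → M.trans s' e s'' → mtrans M s (τ ++ [e]) s''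

/-- The traces of an event system starting from a set of initial states. -/
def traces {S E : Type} (M : ES S E) (I : Set S) : Set (List E) :=
  {τ | ∃ s ∈ I, ∃ s', M.mtrans s τ s'}

/-- Traces starting from a single state. -/
def tracesFrom {S E : Type} (M : ES S E) (s : S) : Set (List E) :=
  M.traces {s}

end ES

/-- Parallel composition of event systems modulo a partial synchronization
function `χ : E1 × E2 ⇀ E`. -/
def ES.par {S1 E1 S2 E2 E : Type} (M1 : ES S1 E1) (M2 : ES S2 E2)
    (χ : E1 → E2 → Option E) : ES (S1 × S2) E :=
  ⟨fun s e s' => ∃ e1 e2, χ e1 e2 = some e ∧ M1.trans s.1 e1 s'.1 ∧ M2.trans s.2 e2 s'.2⟩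

/-- Composition of trace sets modulo `χ`. -/
def tcomp {E1 E2 E : Type} (χ : E1 → E2 → Option E)
    (T1 : Set (List E1)) (T2 : Set (List E2)) : Set (List E) :=
  {τ | ∃ τ1 ∈ T1, ∃ τ2 ∈ T2, ∃ h1 : τ1.length = τ.length, ∃ h2 : τ2.length = τ.length,
      ∀ i : Fin τ.length,
        χ (τ1.get (Fin.cast h1.symm i)) (τ2.get (Fin.cast h2.symm i)) = some (τ.get i)}

/-- A shuffle (interleaving) of two lists. -/
inductive Shuffle {α β : Type} : List α → List β → List (α ⊕ β) → Prop
  | nil : Shuffle [] [] []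
  | left {x xs ys zs} : Shuffle xs ys zs → Shuffle (x :: xs) ys (Sum.inl x :: zs)
  | right {y xs ys zs} : Shuffle xs ys zs → Shuffle xs (y :: ys) (Sum.inr y :: zs)

/-- The synchronization function for interleaving composition:
`χI(e1, skip) = e1`, `χI(skip, e2) = e2`, undefined otherwise. -/
def chiI {E1 E2 : Type} [DecidableEq E1] [DecidableEq E2] (skip1 : E1) (skip2 : E2) :
    E1 → E2 → Option (E1 ⊕ E2) :=
  fun e1 e2 =>
    if e2 = skip2 then some (Sum.inl e1)
    else if e1 = skip1 then some (Sum.inr e2) else none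

/-!
Every `χI`-step moves exactly one component while the other performs its `skip`, so
projecting a run of the composition yields runs of the components whose visible events
interleave as in the composite trace. Conversely, a shuffle of the visible events is
realised by induction on the shuffle: before its next visible event, a component runs a
block of `skip`s, which the composition replays while the other component idles on its
`skip` self-loop.
-/

namespace ES

variable {S E : Type} {M : ES S E} {s t u : S} {e : E} {τ τ' : List E}

theorem mtrans_nil_iff : M.mtrans s [] t ↔ s = t := by
  refine ⟨fun h => ?_, fun h => h ▸ mtrans.nil s⟩
  generalize hτ : ([] : List E) = τ at h
  cases h with
  | nil => rfl
  | snoc => simp at hτ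

theorem mtrans_snoc_iff : M.mtrans s (τ ++ [e]) u ↔ ∃ t, M.mtrans s τ t ∧ M.trans t e u := by
  refine ⟨fun h => ?_, fun ⟨_, hτ, he⟩ => hτ.snoc he⟩
  generalize hτ : τ ++ [e] = τ' at h
  cases h with
  | nil => simp at hτ
  | snoc hrun hstep =>
    obtain ⟨rfl, h⟩ := List.append_inj' hτ rfl
    cases h
    exact ⟨_, hrun, hstep⟩

theorem mtrans_singleton_iff : M.mtrans s [e] t ↔ M.trans s e t := by
  rw [← List.nil_append [e], mtrans_snoc_iff]
  simp [mtrans_nil_iff]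

theorem mtrans_append_iff :
    M.mtrans s (τ ++ τ') u ↔ ∃ t, M.mtrans s τ t ∧ M.mtrans t τ' u := by
  induction τ' using List.reverseRecOn generalizing u with
  | nil => simp [mtrans_nil_iff]
  | append_singleton τ' e ih =>
    rw [← List.append_assoc, mtrans_snoc_iff]
    simp only [ih, mtrans_snoc_iff]
    grind

theorem mtrans_cons_iff :
    M.mtrans s (e :: τ) u ↔ ∃ t, M.trans s e t ∧ M.mtrans t τ u := by
  rw [← List.singleton_append, mtrans_append_iff]
  simp only [mtrans_singleton_iff]

theorem mtrans.append (h : M.mtrans s τ t) (h' : M.mtrans t τ' u) : M.mtrans s (τ ++ τ') u :=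
  mtrans_append_iff.2 ⟨t, h, h'⟩

theorem mtrans.split_of_filter_eq_cons [DecidableEq E] {skip x : E} {xs : List E}
    (h : M.mtrans s τ u) (hτ : τ.filter (· ≠ skip) = x :: xs) :
    ∃ p q t t', M.mtrans s p t ∧ (∀ e ∈ p, e = skip) ∧ x ≠ skip ∧ M.trans t x t' ∧
      M.mtrans t' q u ∧ q.filter (· ≠ skip) = xs := by
  obtain ⟨p, q, rfl, hp, hx, hq⟩ := List.filter_eq_cons_iff.1 hτ
  obtain ⟨t, hp', hxq⟩ := mtrans_append_iff.1 h
  obtain ⟨t', hx', hq'⟩ := mtrans_cons_iff.1 hxq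
  exact ⟨p, q, t, t', hp', by simpa using hp, by simpa using hx, hx', hq', hq⟩

end ES

namespace Shuffle

variable {α β : Type} {xs : List α} {ys : List β} {zs : List (α ⊕ β)}

theorem snoc_left (h : Shuffle xs ys zs) (x : α) :
    Shuffle (xs ++ [x]) ys (zs ++ [Sum.inl x]) := by
  induction h with
  | nil => exact left nil
  | left _ ih => exact left ih
  | right _ ih => exact right ih

theorem snoc_right (h : Shuffle xs ys zs) (y : β) :
    Shuffle xs (ys ++ [y]) (zs ++ [Sum.inr y]) := by
  induction h with
  | nil => exact right nil
  | left _ ih => exact left ih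
  | right _ ih => exact right ih

end Shuffle

section Interleaving

variable {S1 E1 S2 E2 : Type} [DecidableEq E1] [DecidableEq E2]
  {M1 : ES S1 E1} {M2 : ES S2 E2} {skip1 : E1} {skip2 : E2}

theorem chiI_eq_some_iff {e1 : E1} {e2 : E2} {e : E1 ⊕ E2} :
    chiI skip1 skip2 e1 e2 = some e ↔
      e2 = skip2 ∧ e = Sum.inl e1 ∨ e1 = skip1 ∧ e2 ≠ skip2 ∧ e = Sum.inr e2 := by
  unfold chiI
  split_ifs <;> simp_all [eq_comm]

theorem shuffle_of_par_chiI_mtrans {p p' : S1 × S2} {τ : List (E1 ⊕ E2)}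
    (h : (M1.par M2 (chiI skip1 skip2)).mtrans p τ p') :
    ∃ τ1 τ2, M1.mtrans p.1 τ1 p'.1 ∧ M2.mtrans p.2 τ2 p'.2 ∧
      Shuffle (τ1.filter (· ≠ skip1)) (τ2.filter (· ≠ skip2))
        (τ.filter (fun e => e ≠ Sum.inl skip1 ∧ e ≠ Sum.inr skip2)) := by
  induction h with
  | nil => exact ⟨[], [], .nil _, .nil _, .nil⟩
  | snoc _ hstep ih =>
    obtain ⟨τ1, τ2, h1, h2, hsh⟩ := ih
    obtain ⟨e1, e2, hχ, he1, he2⟩ := hstep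
    refine ⟨τ1 ++ [e1], τ2 ++ [e2], h1.snoc he1, h2.snoc he2, ?_⟩
    rcases chiI_eq_some_iff.1 hχ with ⟨rfl, rfl⟩ | ⟨rfl, hne, rfl⟩
    · by_cases hskip : e1 = skip1
      · simpa [hskip] using hsh
      · simpa [hskip] using hsh.snoc_left e1
    · simpa [hne] using hsh.snoc_right e2

theorem par_chiI_mtrans_of_left_skips (hsk2 : ∀ s, M2.trans s skip2 s) {s1 t1 : S1} (s2 : S2)
    {p : List E1} (h : M1.mtrans s1 p t1) (hp : ∀ e ∈ p, e = skip1) :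
    ∃ τ, (M1.par M2 (chiI skip1 skip2)).mtrans (s1, s2) τ (t1, s2) ∧
      τ.filter (fun e => e ≠ Sum.inl skip1 ∧ e ≠ Sum.inr skip2) = [] := by
  induction h with
  | nil => exact ⟨[], .nil _, rfl⟩
  | @snoc _ _ _ e _ hstep ih =>
    obtain ⟨τ, hτ, hvis⟩ := ih fun e he => hp e (by simp [he])
    rw [hp e (by simp)] at hstep
    exact ⟨τ ++ [Sum.inl skip1], hτ.snoc ⟨skip1, skip2, by simp [chiI], hstep, hsk2 s2⟩,
      by rw [List.filter_append, hvis]; simp⟩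

theorem par_chiI_mtrans_of_right_skips (hsk1 : ∀ s, M1.trans s skip1 s) (s1 : S1) {s2 t2 : S2}
    {p : List E2} (h : M2.mtrans s2 p t2) (hp : ∀ e ∈ p, e = skip2) :
    ∃ τ, (M1.par M2 (chiI skip1 skip2)).mtrans (s1, s2) τ (s1, t2) ∧
      τ.filter (fun e => e ≠ Sum.inl skip1 ∧ e ≠ Sum.inr skip2) = [] := by
  induction h with
  | nil => exact ⟨[], .nil _, rfl⟩
  | @snoc _ _ _ e _ hstep ih =>
    obtain ⟨τ, hτ, hvis⟩ := ih fun e he => hp e (by simp [he])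
    rw [hp e (by simp)] at hstep
    exact ⟨τ ++ [Sum.inl skip1], hτ.snoc ⟨skip1, skip2, by simp [chiI], hsk1 s1, hstep⟩,
      by rw [List.filter_append, hvis]; simp⟩

theorem par_chiI_mtrans_of_shuffle (hsk1 : ∀ s, M1.trans s skip1 s)
    (hsk2 : ∀ s, M2.trans s skip2 s) {xs : List E1} {ys : List E2} {σ : List (E1 ⊕ E2)}
    (hsh : Shuffle xs ys σ) {s1 s1' : S1} {s2 s2' : S2} {τ1 : List E1} {τ2 : List E2}
    (h1 : M1.mtrans s1 τ1 s1') (h2 : M2.mtrans s2 τ2 s2')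
    (hτ1 : τ1.filter (· ≠ skip1) = xs) (hτ2 : τ2.filter (· ≠ skip2) = ys) :
    ∃ τ, (M1.par M2 (chiI skip1 skip2)).mtrans (s1, s2) τ (s1', s2') ∧
      τ.filter (fun e => e ≠ Sum.inl skip1 ∧ e ≠ Sum.inr skip2) = σ := by
  induction hsh generalizing s1 s2 τ1 τ2 with
  | nil =>
    obtain ⟨τ, hτ, hvis⟩ := par_chiI_mtrans_of_left_skips hsk2 s2 h1
      (by simpa [List.filter_eq_nil_iff] using hτ1)
    obtain ⟨τ', hτ', hvis'⟩ := par_chiI_mtrans_of_right_skips hsk1 s1' h2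
      (by simpa [List.filter_eq_nil_iff] using hτ2)
    exact ⟨τ ++ τ', hτ.append hτ', by rw [List.filter_append, hvis, hvis']; rfl⟩
  | @left x xs ys zs _ ih =>
    obtain ⟨p, q, t, t', hp, hskip, hx, hstep, hq, hqvis⟩ := h1.split_of_filter_eq_cons hτ1
    obtain ⟨τ, hτ, hvis⟩ := par_chiI_mtrans_of_left_skips hsk2 s2 hp hskip
    obtain ⟨τ', hτ', hvis'⟩ := ih hq h2 hqvis hτ2
    have hx' : (M1.par M2 (chiI skip1 skip2)).trans (t, s2) (Sum.inl x) (t', s2) :=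
      ⟨x, skip2, by simp [chiI], hstep, hsk2 s2⟩
    exact ⟨τ ++ Sum.inl x :: τ', hτ.append (ES.mtrans_cons_iff.2 ⟨_, hx', hτ'⟩),
      by rw [List.filter_append, List.filter_cons_of_pos (by simpa using hx), hvis, hvis']; rfl⟩
  | @right y xs ys zs _ ih =>
    obtain ⟨p, q, t, t', hp, hskip, hy, hstep, hq, hqvis⟩ := h2.split_of_filter_eq_cons hτ2
    obtain ⟨τ, hτ, hvis⟩ := par_chiI_mtrans_of_right_skips hsk1 s1 hp hskip
    obtain ⟨τ', hτ', hvis'⟩ := ih h1 hq hτ1 hqvis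
    have hy' : (M1.par M2 (chiI skip1 skip2)).trans (s1, t) (Sum.inr y) (s1, t') :=
      ⟨skip1, y, by simp [chiI, hy], hsk1 s1, hstep⟩
    exact ⟨τ ++ Sum.inr y :: τ', hτ.append (ES.mtrans_cons_iff.2 ⟨_, hy', hτ'⟩),
      by rw [List.filter_append, List.filter_cons_of_pos (by simpa using hy), hvis, hvis']; rfl⟩

end Interleaving

/-- Interleaving composition via `χI` yields exactly the shuffles of pairs of
component traces, after removing the skip padding. -/
theorem interleaving_traces_are_shuffles {S1 E1 S2 E2 : Type}
    [DecidableEq E1] [DecidableEq E2]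
    (M1 : ES S1 E1) (M2 : ES S2 E2) (I1 : Set S1) (I2 : Set S2)
    (skip1 : E1) (skip2 : E2)
    (hsk1 : ∀ s, M1.trans s skip1 s) (hsk2 : ∀ s, M2.trans s skip2 s) :
    {σ | ∃ τ ∈ (M1.par M2 (chiI skip1 skip2)).traces (I1 ×ˢ I2),
        σ = τ.filter (fun e => e ≠ Sum.inl skip1 ∧ e ≠ Sum.inr skip2)} =
    {σ | ∃ τ1 ∈ M1.traces I1, ∃ τ2 ∈ M2.traces I2,
        Shuffle (τ1.filter (· ≠ skip1)) (τ2.filter (· ≠ skip2)) σ} := by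
  ext σ
  constructor
  · rintro ⟨τ, ⟨⟨s1, s2⟩, ⟨hs1, hs2⟩, _, hrun⟩, rfl⟩
    obtain ⟨τ1, τ2, h1, h2, hsh⟩ := shuffle_of_par_chiI_mtrans hrun
    exact ⟨τ1, ⟨s1, hs1, _, h1⟩, τ2, ⟨s2, hs2, _, h2⟩, hsh⟩
  · rintro ⟨τ1, ⟨s1, hs1, _, h1⟩, τ2, ⟨s2, hs2, _, h2⟩, hsh⟩
    obtain ⟨τ, hrun, hvis⟩ := par_chiI_mtrans_of_shuffle hsk1 hsk2 hsh h1 h2 rfl rfl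
    exact ⟨τ, ⟨(s1, s2), ⟨hs1, hs2⟩, _, hrun⟩, hvis.symm⟩
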